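/- Abstract K-functional interpolation bound (core of Proposition 5.1, parts 1 and 3): Let X and Z be real normed vector spaces and ι : X → Z a linear map with ‖ι x‖_Z ≤ C_ι ‖x‖_X for all x ∈ X. Fix A > 0, reals 0 < B₀ < B, θ ∈ (0, B₀/(A+B₀)), ε₀ > 0 and c_a, c_e ≥ 0, and set ε_n := 2^{−nθ/B₀} ε₀ for n ∈ ℕ₀. Let λ ∈ Z and suppose that for every n ∈ ℕ₀ there exist a_n ∈ X and e_n ∈ Z with λ = ι a_n + e_n, ‖a_n‖_X ≤ c_a ε_n^{−A} and ‖e_n‖_Z ≤ c_e ε_n^{B}. Then there exists a constant c < ∞, depending only on θ, A, B, B₀ and C_ι (and not on λ, ε₀, c_a, c_e), such that Σ_{n ∈ ℤ} 2^{−nθ} K(2^n, λ) ≤ c · (c_a ε₀^{−A} + c_e ε₀^{B}); in particular this sum is finite. -/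

import Mathlib

/-!
For `t = 2ⁿ` with `n ≥ 0` the trivial bound `K(t, λ) ≤ ‖λ‖` suffices, because of the weight
`2^{-nθ}`. For `t = 2^{-k}` one uses the decomposition at the index `m` with
`εₘ ≈ 2^{-ks} ε₀`, for a slope `s` with `θ < sB` and `sA < 1 - θ`; such an `s` exists because
`θ < B₀/(A+B₀) < B/(A+B)`. Then both terms of `K(2^{-k}, λ) ≤ ‖eₘ‖ + 2^{-k}‖aₘ‖` are
`O(2^{-k(θ+δ)})` for some `δ > 0`, and the two-sided series is dominated by a geometric one.
-/

section KFunctional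

variable {X Z : Type*} [SeminormedAddCommGroup X] [Module ℝ X]
  [SeminormedAddCommGroup Z] [Module ℝ Z] (ι : X →ₗ[ℝ] Z) {t : ℝ}

noncomputable def kFunctional (t : ℝ) (z : Z) : ℝ :=
  ⨅ x : X, (‖z - ι x‖ + t * ‖x‖)

lemma kFunctional_nonneg (ht : 0 ≤ t) (z : Z) : 0 ≤ kFunctional ι t z :=
  le_ciInf fun _ => by positivity

lemma kFunctional_le (ht : 0 ≤ t) (z : Z) (x : X) :
    kFunctional ι t z ≤ ‖z - ι x‖ + t * ‖x‖ :=
  ciInf_le ⟨0, by rintro _ ⟨y, rfl⟩; positivity⟩ x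

lemma kFunctional_le_norm (ht : 0 ≤ t) (z : Z) : kFunctional ι t z ≤ ‖z‖ := by
  simpa using kFunctional_le ι ht z 0

lemma kFunctional_le_of_eq_add (ht : 0 ≤ t) {z : Z} {a : X} {e : Z} (h : z = ι a + e) :
    kFunctional ι t z ≤ ‖e‖ + t * ‖a‖ := by
  simpa [h] using kFunctional_le ι ht z a

end KFunctional

lemma norm_le_of_eq_add {X Z : Type*} [SeminormedAddCommGroup X] [SeminormedAddCommGroup Z]
    {ι : X → Z} {C : ℝ} (hι : ∀ x, ‖ι x‖ ≤ C * ‖x‖) {z : Z} {a : X} {e : Z}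
    (h : z = ι a + e) : ‖z‖ ≤ max C 0 * ‖a‖ + ‖e‖ :=
  calc ‖z‖ ≤ ‖ι a‖ + ‖e‖ := h ▸ norm_add_le _ _
    _ ≤ max C 0 * ‖a‖ + ‖e‖ := by
      gcongr
      exact (hι a).trans (by gcongr; exact le_max_left _ _)

lemma exists_nat_mul_mem_Icc {c r : ℝ} (hc : 0 < c) (hr : 0 ≤ r) :
    ∃ m : ℕ, r ≤ m * c ∧ m * c ≤ r + c := by
  refine ⟨⌈r / c⌉₊, ?_, ?_⟩
  · exact (div_le_iff₀ hc).1 (Nat.le_ceil _)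
  · have hceil := (Nat.ceil_lt_add_one (div_nonneg hr hc.le)).le
    calc (⌈r / c⌉₊ : ℝ) * c ≤ (r / c + 1) * c := by gcongr
      _ = r + c := by field_simp

lemma two_rpow_neg_pow (δ : ℝ) (k : ℕ) : ((2 : ℝ) ^ (-δ)) ^ k = 2 ^ (-(k * δ)) := by
  rw [← Real.rpow_natCast, ← Real.rpow_mul (by norm_num), neg_mul, mul_comm]

lemma exists_slope_and_decay {A B B₀ θ : ℝ} (hA : 0 < A) (hB₀ : 0 < B₀) (hB : B₀ < B)
    (hθ : θ ∈ Set.Ioo (0 : ℝ) (B₀ / (A + B₀))) :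
    ∃ s δ : ℝ, 0 ≤ s ∧ 0 < δ ∧ δ ≤ θ ∧ θ + δ ≤ s * B ∧ s * A + θ + δ ≤ 1 := by
  obtain ⟨hθ0, hθ1⟩ := hθ
  have hB0 : 0 < B := hB₀.trans hB
  have hθB₀ : θ * (A + B₀) < B₀ := (lt_div_iff₀ (by linarith)).1 hθ1
  have hθB : θ < B / (A + B) := by
    rw [lt_div_iff₀ (by linarith)]
    nlinarith
  set δ := min θ (B / (A + B) - θ)
  have hθδ : (θ + δ) * (A + B) ≤ B :=
    (le_div_iff₀ (by linarith)).1 (by linarith [min_le_right θ (B / (A + B) - θ)])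
  refine ⟨(θ + δ) / B, δ, by positivity, lt_min hθ0 (by linarith), min_le_left _ _,
    (div_mul_cancel₀ _ hB0.ne').ge, ?_⟩
  calc (θ + δ) / B * A + θ + δ = (θ + δ) * (A + B) / B := by field_simp; ring
    _ ≤ 1 := (div_le_one hB0).2 hθδ

section Exponents

variable {A B θ s δ k u ε₀ : ℝ}

lemma two_rpow_mul_rpow_le (hB : 0 ≤ B) (hk : 0 ≤ k) (hε₀ : 0 < ε₀) (hsB : θ + δ ≤ s * B)
    (hu : k * s ≤ u) :
    2 ^ (k * θ) * (2 ^ (-u) * ε₀) ^ B ≤ ε₀ ^ B * 2 ^ (-(k * δ)) :=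
  calc 2 ^ (k * θ) * (2 ^ (-u) * ε₀) ^ B = ε₀ ^ B * 2 ^ (k * θ + -u * B) := by
        rw [Real.mul_rpow (by positivity) hε₀.le, ← Real.rpow_mul (by norm_num),
          Real.rpow_add two_pos]
        ring
    _ ≤ ε₀ ^ B * 2 ^ (-(k * δ)) := by
        gcongr ε₀ ^ B * 2 ^ ?_
        · norm_num
        · nlinarith

lemma two_rpow_mul_rpow_neg_le {h : ℝ} (hA : 0 ≤ A) (hk : 0 ≤ k) (hε₀ : 0 < ε₀)
    (hsA : s * A + θ + δ ≤ 1) (hu : u ≤ k * s + h) :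
    2 ^ (k * θ) * 2 ^ (-k) * (2 ^ (-u) * ε₀) ^ (-A) ≤
      2 ^ (h * A) * ε₀ ^ (-A) * 2 ^ (-(k * δ)) :=
  calc 2 ^ (k * θ) * 2 ^ (-k) * (2 ^ (-u) * ε₀) ^ (-A)
      = ε₀ ^ (-A) * 2 ^ (k * θ + -k + -u * -A) := by
        rw [Real.mul_rpow (by positivity) hε₀.le, ← Real.rpow_mul (by norm_num),
          Real.rpow_add two_pos, Real.rpow_add two_pos]
        ring
    _ ≤ ε₀ ^ (-A) * 2 ^ (h * A + -(k * δ)) := by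
        gcongr ε₀ ^ (-A) * 2 ^ ?_
        · norm_num
        · nlinarith
    _ = 2 ^ (h * A) * ε₀ ^ (-A) * 2 ^ (-(k * δ)) := by
        rw [Real.rpow_add two_pos]
        ring

end Exponents

section Terms

variable {X Z : Type*} [SeminormedAddCommGroup X] [Module ℝ X]
  [SeminormedAddCommGroup Z] [Module ℝ Z] (ι : X →ₗ[ℝ] Z)

lemma two_rpow_mul_kFunctional_le {θ δ : ℝ} (hδθ : δ ≤ θ) (z : Z) (k : ℕ) :
    2 ^ (-(k : ℝ) * θ) * kFunctional ι (2 ^ (k : ℝ)) z ≤ ‖z‖ * (2 ^ (-δ)) ^ k := by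
  rw [two_rpow_neg_pow, mul_comm ‖z‖]
  have hkδ : -(k : ℝ) * θ ≤ -(k * δ) := by nlinarith [k.cast_nonneg (α := ℝ)]
  exact mul_le_mul (Real.rpow_le_rpow_of_exponent_le one_le_two hkδ)
    (kFunctional_le_norm ι (by positivity) z) (kFunctional_nonneg ι (by positivity) z)
    (by positivity)

lemma two_rpow_mul_kFunctional_neg_le {A B B₀ θ s δ ε₀ ca ce : ℝ} (hA : 0 ≤ A) (hB : 0 ≤ B)
    (hB₀ : 0 < B₀) (hθ : 0 < θ) (hs : 0 ≤ s) (hsB : θ + δ ≤ s * B) (hsA : s * A + θ + δ ≤ 1)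
    (hε₀ : 0 < ε₀) (hca : 0 ≤ ca) (hce : 0 ≤ ce) {lam : Z} {a : ℕ → X} {e : ℕ → Z}
    (hdec : ∀ n : ℕ, lam = ι (a n) + e n)
    (ha : ∀ n : ℕ, ‖a n‖ ≤ ca * ((2 : ℝ) ^ (-(n : ℝ) * θ / B₀) * ε₀) ^ (-A))
    (he : ∀ n : ℕ, ‖e n‖ ≤ ce * ((2 : ℝ) ^ (-(n : ℝ) * θ / B₀) * ε₀) ^ B) (k : ℕ) :
    2 ^ ((k : ℝ) * θ) * kFunctional ι (2 ^ (-(k : ℝ))) lam ≤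
      (ce * ε₀ ^ B + 2 ^ (θ / B₀ * A) * ca * ε₀ ^ (-A)) * (2 ^ (-δ)) ^ k := by
  obtain ⟨m, hm₁, hm₂⟩ :=
    exists_nat_mul_mem_Icc (div_pos hθ hB₀) (mul_nonneg k.cast_nonneg hs)
  have hexp : -(m : ℝ) * θ / B₀ = -(m * (θ / B₀)) := by ring
  have ham := ha m
  have hem := he m
  rw [hexp] at ham hem
  calc 2 ^ ((k : ℝ) * θ) * kFunctional ι (2 ^ (-(k : ℝ))) lam
      ≤ 2 ^ ((k : ℝ) * θ) * (ce * (2 ^ (-(m * (θ / B₀))) * ε₀) ^ B +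
          2 ^ (-(k : ℝ)) * (ca * (2 ^ (-(m * (θ / B₀))) * ε₀) ^ (-A))) := by
        gcongr
        exact (kFunctional_le_of_eq_add ι (by positivity) (hdec m)).trans (by gcongr)
    _ = ce * (2 ^ ((k : ℝ) * θ) * (2 ^ (-(m * (θ / B₀))) * ε₀) ^ B) +
          ca * (2 ^ ((k : ℝ) * θ) * 2 ^ (-(k : ℝ)) * (2 ^ (-(m * (θ / B₀))) * ε₀) ^ (-A)) := by
        ring
    _ ≤ ce * (ε₀ ^ B * 2 ^ (-(k * δ))) +
          ca * (2 ^ (θ / B₀ * A) * ε₀ ^ (-A) * 2 ^ (-(k * δ))) :=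
        add_le_add
          (mul_le_mul_of_nonneg_left (two_rpow_mul_rpow_le hB k.cast_nonneg hε₀ hsB hm₁) hce)
          (mul_le_mul_of_nonneg_left (two_rpow_mul_rpow_neg_le hA k.cast_nonneg hε₀ hsA hm₂) hca)
    _ = (ce * ε₀ ^ B + 2 ^ (θ / B₀ * A) * ca * ε₀ ^ (-A)) * (2 ^ (-δ)) ^ k := by
        rw [two_rpow_neg_pow]
        ring

end Terms

lemma tsum_ofReal_int_le_of_geometric {F : ℤ → ℝ} {C ρ : ℝ} (hF : ∀ n, 0 ≤ F n) (hρ₀ : 0 ≤ ρ)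
    (hρ₁ : ρ < 1) (h : ∀ k : ℕ, F k + F (-k) ≤ C * ρ ^ k) :
    ∑' n, ENNReal.ofReal (F n) ≤ ENNReal.ofReal (C / (1 - ρ)) := by
  have hC : 0 ≤ C := by simpa using (add_nonneg (hF 0) (hF 0)).trans (h 0)
  calc ∑' n, ENNReal.ofReal (F n)
      ≤ ∑' n, ENNReal.ofReal (F n) + ENNReal.ofReal (F 0) := le_self_add
    _ = ∑' k : ℕ, (ENNReal.ofReal (F k) + ENNReal.ofReal (F (-k))) :=
        (tsum_nat_add_neg ENNReal.summable).symm
    _ ≤ ∑' k : ℕ, ENNReal.ofReal (C * ρ ^ k) := by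
        gcongr with k
        rw [← ENNReal.ofReal_add (hF _) (hF _)]
        exact ENNReal.ofReal_le_ofReal (h k)
    _ = ENNReal.ofReal (C / (1 - ρ)) := by
        rw [← ENNReal.ofReal_tsum_of_nonneg (fun k => by positivity)
          ((summable_geometric_of_lt_one hρ₀ hρ₁).mul_left C), tsum_mul_left,
          tsum_geometric_of_lt_one hρ₀ hρ₁, div_eq_mul_inv]

/-- Abstract K-functional interpolation bound: given a linear map `ι : X → Z`
between real normed spaces with `‖ι x‖ ≤ C_ι ‖x‖`, parameters `A > 0`,
`0 < B₀ < B`, `θ ∈ (0, B₀/(A+B₀))`, and for every `n ∈ ℕ` a decomposition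
`λ = ι aₙ + eₙ` with `‖aₙ‖ ≤ c_a εₙ^{-A}`, `‖eₙ‖ ≤ c_e εₙ^{B}` along
`εₙ = 2^{-nθ/B₀} ε₀`, the discrete interpolation sum
`Σ_{n ∈ ℤ} 2^{-nθ} K(2ⁿ, λ)` is bounded by `c (c_a ε₀^{-A} + c_e ε₀^{B})`,
with `c` depending only on `θ, A, B, B₀, C_ι`; in particular this sum is
finite.  Here `K(t, z) = inf_x (‖z - ι x‖ + t ‖x‖)`. -/
theorem abstract_K_interpolation_bound
    (A B B₀ θ Cι : ℝ) (hA : 0 < A) (hB₀ : 0 < B₀) (hB : B₀ < B)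
    (hθ : θ ∈ Set.Ioo (0 : ℝ) (B₀ / (A + B₀))) :
    ∃ c : ℝ, ∀ (X Z : Type) [NormedAddCommGroup X] [NormedSpace ℝ X]
      [NormedAddCommGroup Z] [NormedSpace ℝ Z] (ι : X →ₗ[ℝ] Z),
      (∀ x : X, ‖ι x‖ ≤ Cι * ‖x‖) →
      ∀ (ε₀ ca ce : ℝ), 0 < ε₀ → 0 ≤ ca → 0 ≤ ce →
      ∀ (lam : Z) (a : ℕ → X) (e : ℕ → Z),
      (∀ n : ℕ, lam = ι (a n) + e n) →
      (∀ n : ℕ, ‖a n‖ ≤ ca * ((2 : ℝ) ^ (-(n : ℝ) * θ / B₀) * ε₀) ^ (-A)) →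
      (∀ n : ℕ, ‖e n‖ ≤ ce * ((2 : ℝ) ^ (-(n : ℝ) * θ / B₀) * ε₀) ^ B) →
      (∑' n : ℤ, ENNReal.ofReal ((2 : ℝ) ^ (-(n : ℝ) * θ) *
          ⨅ x : X, (‖lam - ι x‖ + (2 : ℝ) ^ (n : ℝ) * ‖x‖))) ≤
        ENNReal.ofReal (c * (ca * ε₀ ^ (-A) + ce * ε₀ ^ B)) := by
  obtain ⟨s, δ, hs, hδ, hδθ, hsB, hsA⟩ := exists_slope_and_decay hA hB₀ hB hθ
  set P : ℝ := 2 ^ (θ / B₀ * A)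
  set ρ : ℝ := 2 ^ (-δ)
  have hρ : ρ < 1 := Real.rpow_lt_one_of_one_lt_of_neg one_lt_two (by linarith)
  refine ⟨(max Cι 0 + P + 2) / (1 - ρ), ?_⟩
  intro X Z _ _ _ _ ι hι ε₀ ca ce hε₀ hca hce lam a e hdec ha he
  have hlam : ‖lam‖ ≤ max Cι 0 * (ca * ε₀ ^ (-A)) + ce * ε₀ ^ B := by
    refine (norm_le_of_eq_add hι (hdec 0)).trans ?_
    gcongr
    · simpa using ha 0
    · simpa using he 0
  have hconst : ‖lam‖ + (ce * ε₀ ^ B + P * ca * ε₀ ^ (-A)) ≤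
      (max Cι 0 + P + 2) * (ca * ε₀ ^ (-A) + ce * ε₀ ^ B) := by
    have : 0 ≤ ca * ε₀ ^ (-A) := by positivity
    have : 0 ≤ ce * ε₀ ^ B := by positivity
    nlinarith [le_max_right Cι 0, (by positivity : (0 : ℝ) ≤ P)]
  refine (tsum_ofReal_int_le_of_geometric
    (F := fun n : ℤ => 2 ^ (-(n : ℝ) * θ) * kFunctional ι (2 ^ (n : ℝ)) lam)
    (C := (max Cι 0 + P + 2) * (ca * ε₀ ^ (-A) + ce * ε₀ ^ B))
    (fun n => mul_nonneg (by positivity) (kFunctional_nonneg ι (by positivity) lam))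
    (by positivity) hρ (fun k => ?_)).trans_eq ?_
  · have hpos := two_rpow_mul_kFunctional_le ι hδθ lam k
    have hneg := two_rpow_mul_kFunctional_neg_le ι hA.le (hB₀.trans hB).le hB₀ hθ.1 hs hsB hsA
      hε₀ hca hce hdec ha he k
    simp only [Int.cast_natCast, Int.cast_neg, neg_neg]
    nlinarith [pow_nonneg (by positivity : (0 : ℝ) ≤ ρ) k]
  · congr 1
    ring
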